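/- arXiv:2407.20177 — 2 statements merged into one kernel-verified Lean document; each statement's English description precedes it below -/
import Mathlib

section
/- (Theorem 1: Scale-Dependent Optimal Composition) Let m ≥ 1, β_i > 0, γ_i > 0 for i = 1,…,m. Let N*(N^{(1)}) and N*(N^{(2)}) be the optimal allocations (minimizers of f(N) = ∑_{i=1}^m β_i · N_i^{-γ_i} on S(N^{(1)}) and S(N^{(2)}) respectively) for two distinct budgets N^{(1)} ≠ N^{(2)}, both positive. Let k > 0 be any real constant, define M ∈ ℝ^m elementwise by M_i = N_i*(N^{(2)}) · ( N_i*(N^{(2)}) / N_i*(N^{(1)}) )^k, and set N^{(3)} = ∑_{i=1}^m M_i. Then M is the optimal allocation at budget N^{(3)}: M minimizes f on S(N^{(3)}). -/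
/-!
A positive allocation `w` minimizes `∑ βᵢ wᵢ^(-γᵢ)` on its budget simplex exactly when the
marginal gains `gᵢ(w) = βᵢ γᵢ wᵢ^(-γᵢ-1)` are all equal: necessity by perturbing along directions
that keep the budget, sufficiency because each summand is convex and so lies above its tangent
line. The marginal gain of `Mᵢ = yᵢ (yᵢ/xᵢ)^k` is `gᵢ(y) (gᵢ(y)/gᵢ(x))^k`, which is independent
of `i` once `g(x)` and `g(y)` are.
-/

open Real Filter Topology

theorem one_add_mul_sub_one_le_rpow_of_nonpos {u p : ℝ} (hu : 0 < u) (hp : p ≤ 0) :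
    1 + p * (u - 1) ≤ u ^ p := by
  have hlog : p * (u - 1) ≤ p * log u := mul_le_mul_of_nonpos_left (log_le_sub_one_of_pos hu) hp
  calc 1 + p * (u - 1) ≤ p * log u + 1 := by linarith
    _ ≤ exp (p * log u) := add_one_le_exp _
    _ = u ^ p := by rw [rpow_def_of_pos hu, mul_comm]

theorem rpow_add_mul_rpow_sub_one_mul_sub_le_of_nonpos {w z p : ℝ} (hw : 0 < w) (hz : 0 < z)
    (hp : p ≤ 0) : w ^ p + p * w ^ (p - 1) * (z - w) ≤ z ^ p := by
  have h := mul_le_mul_of_nonneg_left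
    (one_add_mul_sub_one_le_rpow_of_nonpos (div_pos hz hw) hp) (rpow_pos_of_pos hw p).le
  rw [div_rpow hz.le hw.le, mul_div_cancel₀ _ (rpow_pos_of_pos hw p).ne'] at h
  rw [rpow_sub_one hw.ne']
  refine le_of_eq_of_le ?_ h
  field_simp

section Allocation

variable {ι : Type*}

/-- `-∂ loss / ∂ wᵢ`. -/
noncomputable def marginalGain (β γ w : ι → ℝ) (i : ι) : ℝ := β i * γ i * w i ^ (-γ i - 1)

theorem marginalGain_mul_div_rpow {β γ x y : ι → ℝ} {i : ι} (hβγ : β i * γ i ≠ 0)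
    (hx : 0 < x i) (hy : 0 < y i) (k : ℝ) :
    marginalGain β γ (fun j => y j * (y j / x j) ^ k) i =
      marginalGain β γ y i * (marginalGain β γ y i / marginalGain β γ x i) ^ k := by
  have hq : 0 < y i / x i := div_pos hy hx
  simp only [marginalGain]
  rw [mul_div_mul_left _ _ hβγ, ← div_rpow hy.le hx.le, ← rpow_mul hq.le, mul_comm (-γ i - 1),
    rpow_mul hq.le, mul_rpow hy.le (rpow_pos_of_pos hq k).le]
  ring

variable [Fintype ι]

noncomputable def loss (β γ w : ι → ℝ) : ℝ := ∑ i, β i * w i ^ (-γ i)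

def IsOptimalAllocation (β γ : ι → ℝ) (N : ℝ) (w : ι → ℝ) : Prop :=
  (∀ i, 0 < w i) ∧ ∑ i, w i = N ∧
    ∀ z : ι → ℝ, (∀ i, 0 < z i) → ∑ i, z i = N → loss β γ w ≤ loss β γ z

theorem hasDerivAt_loss_add_mul {β γ w : ι → ℝ} (hw : ∀ i, 0 < w i) (d : ι → ℝ) :
    HasDerivAt (fun t => loss β γ fun i => w i + t * d i)
      (-∑ i, marginalGain β γ w i * d i) 0 := by
  have h := HasDerivAt.fun_sum (u := Finset.univ) fun i _ =>
    (((hasDerivAt_id (0 : ℝ)).mul_const (d i)).const_add (w i)).rpow_const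
      (p := -γ i) (Or.inl (by simpa using (hw i).ne')) |>.const_mul (β i)
  simp only [id, zero_mul, add_zero, one_mul] at h
  refine h.congr_deriv ?_
  simp only [marginalGain, ← Finset.sum_neg_distrib]
  exact Finset.sum_congr rfl fun i _ => by ring

theorem IsOptimalAllocation.sum_marginalGain_mul_eq_zero {β γ w : ι → ℝ} {N : ℝ}
    (hw : IsOptimalAllocation β γ N w) {d : ι → ℝ} (hd : ∑ i, d i = 0) :
    ∑ i, marginalGain β γ w i * d i = 0 := by
  obtain ⟨hpos, hsum, hmin⟩ := hw
  have hnear : ∀ᶠ t in 𝓝 (0 : ℝ), ∀ i, 0 < w i + t * d i :=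
    eventually_all.2 fun i => continuousAt_const.eventually_lt (by fun_prop) (by simpa using hpos i)
  have hlocal : IsLocalMin (fun t => loss β γ fun i => w i + t * d i) 0 := by
    filter_upwards [hnear] with t ht
    refine (congrArg (loss β γ) ?_).trans_le (hmin _ ht ?_)
    · simp
    · rw [Finset.sum_add_distrib, ← Finset.mul_sum, hd, mul_zero, add_zero, hsum]
  simpa using hlocal.hasDerivAt_eq_zero (hasDerivAt_loss_add_mul hpos d)

theorem IsOptimalAllocation.marginalGain_eq {β γ w : ι → ℝ} {N : ℝ}
    (hw : IsOptimalAllocation β γ N w) (i j : ι) :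
    marginalGain β γ w i = marginalGain β γ w j := by
  classical
  have h := hw.sum_marginalGain_mul_eq_zero (d := Pi.single i 1 - Pi.single j 1)
    (by simp [Finset.sum_sub_distrib])
  simp only [Pi.sub_apply, mul_sub, Finset.sum_sub_distrib, Pi.single_apply, mul_ite, mul_one,
    mul_zero, Finset.sum_ite_eq', Finset.mem_univ, if_true] at h
  linarith

theorem isOptimalAllocation_of_marginalGain_eq {β γ w : ι → ℝ} (hβ : ∀ i, 0 ≤ β i)
    (hγ : ∀ i, 0 ≤ γ i) (hw : ∀ i, 0 < w i)
    (heq : ∀ i j, marginalGain β γ w i = marginalGain β γ w j) :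
    IsOptimalAllocation β γ (∑ i, w i) w := by
  refine ⟨hw, rfl, fun z hz hsum => ?_⟩
  have htangent : ∀ i, β i * w i ^ (-γ i) - marginalGain β γ w i * (z i - w i) ≤
      β i * z i ^ (-γ i) := fun i => by
    have h := mul_le_mul_of_nonneg_left
      (rpow_add_mul_rpow_sub_one_mul_sub_le_of_nonpos (hw i) (hz i) (neg_nonpos.2 (hγ i))) (hβ i)
    simp only [marginalGain]
    linarith
  have hbalance : ∑ i, marginalGain β γ w i * (z i - w i) = 0 := by
    rcases isEmpty_or_nonempty ι with _ | ⟨⟨i₀⟩⟩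
    · simp
    · rw [Finset.sum_congr rfl fun i _ => by rw [heq i i₀], ← Finset.mul_sum,
        Finset.sum_sub_distrib, hsum, sub_self, mul_zero]
  calc loss β γ w = ∑ i, (β i * w i ^ (-γ i) - marginalGain β γ w i * (z i - w i)) := by
        rw [Finset.sum_sub_distrib, hbalance, sub_zero, loss]
    _ ≤ loss β γ z := Finset.sum_le_sum fun i _ => htangent i

end Allocation

theorem scale_dependent_optimal_composition_general (m : ℕ)
    (β γ : Fin m → ℝ) (hβ : ∀ i, 0 < β i) (hγ : ∀ i, 0 < γ i)
    (N₁ N₂ : ℝ)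
    (x : Fin m → ℝ) (hx_pos : ∀ i, 0 < x i) (hx_sum : ∑ i, x i = N₁)
    (hx_min : ∀ z : Fin m → ℝ, (∀ i, 0 < z i) → ∑ i, z i = N₁ →
      ∑ i, β i * x i ^ (-γ i) ≤ ∑ i, β i * z i ^ (-γ i))
    (y : Fin m → ℝ) (hy_pos : ∀ i, 0 < y i) (hy_sum : ∑ i, y i = N₂)
    (hy_min : ∀ z : Fin m → ℝ, (∀ i, 0 < z i) → ∑ i, z i = N₂ →
      ∑ i, β i * y i ^ (-γ i) ≤ ∑ i, β i * z i ^ (-γ i))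
    (k : ℝ)
    (M : Fin m → ℝ) (hM : ∀ i, M i = y i * (y i / x i) ^ k)
    (N₃ : ℝ) (hN₃ : N₃ = ∑ i, M i) :
    (∀ i, 0 < M i) ∧ ∑ i, M i = N₃ ∧
      ∀ z : Fin m → ℝ, (∀ i, 0 < z i) → ∑ i, z i = N₃ →
        ∑ i, β i * M i ^ (-γ i) ≤ ∑ i, β i * z i ^ (-γ i) := by
  obtain rfl : M = fun i => y i * (y i / x i) ^ k := funext hM
  subst hN₃
  have hx_eq := IsOptimalAllocation.marginalGain_eq (β := β) (γ := γ) ⟨hx_pos, hx_sum, hx_min⟩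
  have hy_eq := IsOptimalAllocation.marginalGain_eq (β := β) (γ := γ) ⟨hy_pos, hy_sum, hy_min⟩
  have hβγ i : β i * γ i ≠ 0 := (mul_pos (hβ i) (hγ i)).ne'
  refine isOptimalAllocation_of_marginalGain_eq (fun i => (hβ i).le) (fun i => (hγ i).le)
    (fun i => mul_pos (hy_pos i) (rpow_pos_of_pos (div_pos (hy_pos i) (hx_pos i)) k)) fun i j => ?_
  rw [marginalGain_mul_div_rpow (hβγ i) (hx_pos i) (hy_pos i),
    marginalGain_mul_div_rpow (hβγ j) (hx_pos j) (hy_pos j), hx_eq i j, hy_eq i j]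

/-- Theorem 1 (Scale-Dependent Optimal Composition): given the optimal
allocations at two distinct positive budgets `N⁽¹⁾ ≠ N⁽²⁾` and any `k > 0`,
the elementwise allocation `M i = N_i*(N⁽²⁾) · (N_i*(N⁽²⁾)/N_i*(N⁽¹⁾))^k`
is the optimal allocation for the budget `N⁽³⁾ = ∑ i, M i`. -/
theorem scale_dependent_optimal_composition (m : ℕ) (hm : 1 ≤ m)
    (β γ : Fin m → ℝ) (hβ : ∀ i, 0 < β i) (hγ : ∀ i, 0 < γ i)
    (N₁ N₂ : ℝ) (hN₁ : 0 < N₁) (hN₂ : 0 < N₂) (hne : N₁ ≠ N₂)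
    (x : Fin m → ℝ) (hx_pos : ∀ i, 0 < x i) (hx_sum : ∑ i, x i = N₁)
    (hx_min : ∀ z : Fin m → ℝ, (∀ i, 0 < z i) → ∑ i, z i = N₁ →
      ∑ i, β i * x i ^ (-γ i) ≤ ∑ i, β i * z i ^ (-γ i))
    (y : Fin m → ℝ) (hy_pos : ∀ i, 0 < y i) (hy_sum : ∑ i, y i = N₂)
    (hy_min : ∀ z : Fin m → ℝ, (∀ i, 0 < z i) → ∑ i, z i = N₂ →
      ∑ i, β i * y i ^ (-γ i) ≤ ∑ i, β i * z i ^ (-γ i))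
    (k : ℝ) (hk : 0 < k)
    (M : Fin m → ℝ) (hM : ∀ i, M i = y i * (y i / x i) ^ k)
    (N₃ : ℝ) (hN₃ : N₃ = ∑ i, M i) :
    (∀ i, 0 < M i) ∧ ∑ i, M i = N₃ ∧
      ∀ z : Fin m → ℝ, (∀ i, 0 < z i) → ∑ i, z i = N₃ →
        ∑ i, β i * M i ^ (-γ i) ≤ ∑ i, β i * z i ^ (-γ i) :=
  scale_dependent_optimal_composition_general m β γ hβ hγ N₁ N₂ x hx_pos hx_sum hx_min y hy_pos
    hy_sum hy_min k M hM N₃ hN₃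
end

section
/- Let m ≥ 1, β_i > 0, γ_i > 0 for i = 1,…,m, and let N > 0. Then there exists a unique λ > 0 such that ∑_{i=1}^m ( β_i γ_i / λ )^{1/(γ_i + 1)} = N, and the vector N* defined by N_i* = ( β_i γ_i / λ )^{1/(γ_i + 1)} is the optimal allocation at budget N, i.e., N* minimizes f(N) = ∑_{i=1}^m β_i · N_i^{-γ_i} on S(N). -/
open Finset Real

/-!
The left-hand side of `∑ i, (β i γ i / λ)^(1/(γ i + 1)) = N` decreases strictly and continuously
in `λ > 0`, from `+∞` at `0⁺` to `0` at `∞`, so the multiplier `λ` exists and is unique.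
At the corresponding point `x` every marginal loss `β i γ i x_i^(-(γ i + 1))` equals `λ`. By
convexity of `t ↦ t^(-γ)` on `(0, ∞)` each term lies above its tangent at `x`,
`β y^(-γ) ≥ β x^(-γ) - λ (y - x)`, and summed over `i` the `λ`-terms cancel on the budget
simplex, so `f(x) ≤ f(y)`.
-/

open Filter Topology

section SumDivRpow

variable {ι : Type*} [Fintype ι] {a p : ι → ℝ}

theorem strictAntiOn_sum_div_rpow [Nonempty ι] (ha : ∀ i, 0 < a i) (hp : ∀ i, 0 < p i) :
    StrictAntiOn (fun lam : ℝ => ∑ i, (a i / lam) ^ p i) (Set.Ioi 0) := by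
  intro u hu v _ huv
  refine sum_lt_sum_of_nonempty univ_nonempty fun i _ => ?_
  exact rpow_lt_rpow (div_pos (ha i) (lt_trans hu huv)).le
    (div_lt_div_of_pos_left (ha i) hu huv) (hp i)

theorem continuousOn_sum_div_rpow (hp : ∀ i, 0 ≤ p i) :
    ContinuousOn (fun lam : ℝ => ∑ i, (a i / lam) ^ p i) (Set.Ioi 0) :=
  continuousOn_finsetSum _ fun i _ =>
    (continuousOn_const.div continuousOn_id fun _ h => ne_of_gt h).rpow_const
      fun _ _ => Or.inr (hp i)

theorem tendsto_sum_div_rpow_nhdsGT_zero [Nonempty ι] (ha : ∀ i, 0 < a i) (hp : ∀ i, 0 < p i) :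
    Tendsto (fun lam : ℝ => ∑ i, (a i / lam) ^ p i) (𝓝[>] 0) atTop := by
  obtain ⟨i₀⟩ := ‹Nonempty ι›
  have hterm : Tendsto (fun lam : ℝ => (a i₀ / lam) ^ p i₀) (𝓝[>] 0) atTop :=
    (tendsto_rpow_atTop (hp i₀)).comp (tendsto_inv_nhdsGT_zero.const_mul_atTop (ha i₀))
  refine tendsto_atTop_mono' _ ?_ hterm
  filter_upwards [self_mem_nhdsWithin] with lam (hlam : 0 < lam)
  exact single_le_sum (f := fun i => (a i / lam) ^ p i)
    (fun i _ => rpow_nonneg (div_pos (ha i) hlam).le _) (mem_univ i₀)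

theorem tendsto_sum_div_rpow_atTop (hp : ∀ i, 0 < p i) :
    Tendsto (fun lam : ℝ => ∑ i, (a i / lam) ^ p i) atTop (𝓝 0) := by
  have hterm (i : ι) : Tendsto (fun lam : ℝ => (a i / lam) ^ p i) atTop (𝓝 0) := by
    have := (continuousAt_rpow_const 0 (p i) (Or.inr (hp i).le)).tendsto.comp
      (tendsto_const_nhds (x := a i) |>.div_atTop tendsto_id)
    rwa [zero_rpow (hp i).ne'] at this
  simpa using tendsto_finsetSum univ fun i _ => hterm i

theorem existsUnique_sum_div_rpow_eq [Nonempty ι] (ha : ∀ i, 0 < a i) (hp : ∀ i, 0 < p i)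
    {N : ℝ} (hN : 0 < N) : ∃! lam : ℝ, 0 < lam ∧ ∑ i, (a i / lam) ^ p i = N := by
  obtain ⟨l, hSl, hl⟩ := ((tendsto_sum_div_rpow_nhdsGT_zero ha hp).eventually_ge_atTop N).and
    self_mem_nhdsWithin |>.exists
  obtain ⟨u, hSu, hlu⟩ := ((tendsto_sum_div_rpow_atTop (a := a) hp).eventually
    (gt_mem_nhds hN)).and (eventually_ge_atTop l) |>.exists
  have hl0 : 0 < l := hl
  have hcont := (continuousOn_sum_div_rpow (a := a) fun i => (hp i).le).mono
    fun x (hx : x ∈ Set.Icc l u) => lt_of_lt_of_le hl0 hx.1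
  obtain ⟨lam, hlam, hSlam⟩ := intermediate_value_Icc' hlu hcont ⟨hSu.le, hSl⟩
  have hlam0 : 0 < lam := lt_of_lt_of_le hl0 hlam.1
  refine ⟨lam, ⟨hlam0, hSlam⟩, fun μ ⟨hμ, hSμ⟩ => ?_⟩
  exact (strictAntiOn_sum_div_rpow ha hp).injOn hμ hlam0 (hSμ.trans hSlam.symm)

end SumDivRpow

theorem one_add_le_rpow_neg_add_mul {c t : ℝ} (hc : 0 ≤ c) (ht : 0 < t) :
    1 + c ≤ t ^ (-c) + c * t := by
  -- weighted AM-GM for `t ^ (-c)` and `t` with weights `1 : c`, whose geometric mean is `1`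
  have hgm := geom_mean_le_arith_mean2_weighted (w₁ := 1 / (1 + c)) (w₂ := c / (1 + c))
    (by positivity) (by positivity) (rpow_nonneg ht.le (-c)) ht.le (by field_simp)
  have hprod : (t ^ (-c)) ^ (1 / (1 + c)) * t ^ (c / (1 + c)) = 1 := by
    rw [← rpow_mul ht.le, ← rpow_add ht, show -c * (1 / (1 + c)) + c / (1 + c) = 0 by ring,
      rpow_zero]
  rw [hprod] at hgm
  calc 1 + c = (1 + c) * 1 := (mul_one _).symm
    _ ≤ (1 + c) * (1 / (1 + c) * t ^ (-c) + c / (1 + c) * t) := by gcongr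
    _ = t ^ (-c) + c * t := by field_simp

theorem rpow_neg_sub_mul_le {c x y : ℝ} (hc : 0 ≤ c) (hx : 0 < x) (hy : 0 < y) :
    x ^ (-c) - c * x ^ (-(c + 1)) * (y - x) ≤ y ^ (-c) := by
  have h := mul_le_mul_of_nonneg_left (one_add_le_rpow_neg_add_mul hc (div_pos hy hx))
    (rpow_nonneg hx.le (-c))
  rw [div_rpow hy.le hx.le] at h
  have hxc : x ^ (-(c + 1)) = x ^ (-c) / x := by
    rw [neg_add, rpow_add hx, rpow_neg_one, div_eq_mul_inv]
  have hA : 0 < x ^ (-c) := rpow_pos_of_pos hx _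
  rw [hxc]
  calc x ^ (-c) - c * (x ^ (-c) / x) * (y - x)
      = x ^ (-c) * (1 + c) - x ^ (-c) * (c * (y / x)) := by field_simp; ring
    _ ≤ y ^ (-c) := by
      rw [mul_add (x ^ (-c)) (y ^ (-c) / x ^ (-c)), mul_div_cancel₀ _ hA.ne'] at h
      linarith

theorem mul_rpow_one_div_rpow_neg {a lam p : ℝ} (ha : 0 < a) (hlam : 0 < lam) (hp : p ≠ 0) :
    a * ((a / lam) ^ (1 / p)) ^ (-p) = lam := by
  rw [← rpow_mul (div_pos ha hlam).le, one_div_mul_eq_div, neg_div, div_self hp, rpow_neg_one,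
    inv_div, mul_div_cancel₀ _ ha.ne']

theorem sum_mul_rpow_neg_le_of_marginal_eq {ι : Type*} [Fintype ι] {β γ x z : ι → ℝ} {lam : ℝ}
    (hβ : ∀ i, 0 ≤ β i) (hγ : ∀ i, 0 ≤ γ i) (hx : ∀ i, 0 < x i) (hz : ∀ i, 0 < z i)
    (hmarg : ∀ i, β i * γ i * x i ^ (-(γ i + 1)) = lam) (hsum : ∑ i, x i = ∑ i, z i) :
    ∑ i, β i * x i ^ (-γ i) ≤ ∑ i, β i * z i ^ (-γ i) := by
  have htangent : ∀ i, β i * x i ^ (-γ i) - lam * (z i - x i) ≤ β i * z i ^ (-γ i) := by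
    intro i
    rw [← hmarg i]
    have := mul_le_mul_of_nonneg_left (rpow_neg_sub_mul_le (hγ i) (hx i) (hz i)) (hβ i)
    linarith
  calc ∑ i, β i * x i ^ (-γ i) = ∑ i, (β i * x i ^ (-γ i) - lam * (z i - x i)) := by
        rw [sum_sub_distrib, ← mul_sum, sum_sub_distrib, hsum, sub_self, mul_zero, sub_zero]
    _ ≤ ∑ i, β i * z i ^ (-γ i) := sum_le_sum fun i _ => htangent i

/-- Lagrange-multiplier characterization of the optimal allocation: there is a
unique `λ > 0` with `∑ i, (β i γ i / λ)^(1/(γ i + 1)) = N`, and the vector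
`N_i* = (β i γ i / λ)^(1/(γ i + 1))` minimizes the loss on `S(N)`. -/
theorem optimal_allocation_lagrange (m : ℕ) (hm : 1 ≤ m)
    (β γ : Fin m → ℝ) (hβ : ∀ i, 0 < β i) (hγ : ∀ i, 0 < γ i)
    (N : ℝ) (hN : 0 < N) :
    (∃! lam : ℝ, 0 < lam ∧
        ∑ i, (β i * γ i / lam) ^ (1 / (γ i + 1)) = N) ∧
      ∀ lam : ℝ, 0 < lam →
        (∑ i, (β i * γ i / lam) ^ (1 / (γ i + 1)) = N) →
        ∀ z : Fin m → ℝ, (∀ i, 0 < z i) → ∑ i, z i = N →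
          ∑ i, β i * ((β i * γ i / lam) ^ (1 / (γ i + 1))) ^ (-γ i) ≤
            ∑ i, β i * z i ^ (-γ i) := by
  have : Nonempty (Fin m) := ⟨⟨0, hm⟩⟩
  have hβγ (i : Fin m) : 0 < β i * γ i := mul_pos (hβ i) (hγ i)
  refine ⟨existsUnique_sum_div_rpow_eq hβγ (fun i => by have := hγ i; positivity) hN, ?_⟩
  intro lam hlam hsum z hz hzsum
  have hmarg (i : Fin m) :
      β i * γ i * ((β i * γ i / lam) ^ (1 / (γ i + 1))) ^ (-(γ i + 1)) = lam :=
    mul_rpow_one_div_rpow_neg (hβγ i) hlam (by linarith [hγ i])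
  exact sum_mul_rpow_neg_le_of_marginal_eq (fun i => (hβ i).le) (fun i => (hγ i).le)
    (fun i => rpow_pos_of_pos (div_pos (hβγ i) hlam) _) hz hmarg (hsum.trans hzsum.symm)
end
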